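/- arXiv:1710.00956 — 3 statements merged into one kernel-verified Lean document; each statement's English description precedes it below -/
import Mathlib

section
/- Let T be a nonempty finite index set, {x_i}_{i∈T} ⊆ ℝ^m, k ≥ 1, and let s ≤ |T|. If S is drawn uniformly at random from the collection of all s-element subsets of T, then the expected value of val(S-SDP) satisfies E[val(S-SDP)] ≤ val(T-IP). -/
open scoped BigOperators

/-- The optimal `k`-means value of a finite collection of points
`x : T → ℝ^m`: the minimum over all assignments of the points into `k`
clusters of the average squared distance to the cluster centroids
(empty clusters contribute zero). -/
noncomputable def kmeansVal {m : ℕ} {T : Type*} [Fintype T] (k : ℕ)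
    (x : T → EuclideanSpace ℝ (Fin m)) : ℝ :=
  ⨅ c : T → Fin k,
    (Fintype.card T : ℝ)⁻¹ *
      ∑ t : Fin k,
        ∑ i ∈ Finset.univ.filter (fun i => c i = t),
          ‖x i - ((Finset.univ.filter (fun j => c j = t)).card : ℝ)⁻¹ •
            ∑ j ∈ Finset.univ.filter (fun j => c j = t), x j‖ ^ 2

/-- The value of the Peng–Wei semidefinite relaxation of `k`-means for the
points `x : S → ℝ^m`: minimize `(2|S|)⁻¹ tr(D X)` over symmetric matrices `X`
with `X1 = 1`, `tr X = k`, `X` entrywise nonnegative and positive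
semidefinite, where `D i j = ‖x i - x j‖²`. -/
noncomputable def sdpVal {m : ℕ} {S : Type*} [Fintype S] (k : ℕ)
    (x : S → EuclideanSpace ℝ (Fin m)) : ℝ :=
  sInf {v : ℝ | ∃ X : Matrix S S ℝ,
    X.PosSemidef ∧ (∀ i j, 0 ≤ X i j) ∧
    X.mulVec (fun _ => (1 : ℝ)) = (fun _ => (1 : ℝ)) ∧ X.trace = (k : ℝ) ∧
    v = (2 * (Fintype.card S : ℝ))⁻¹ *
      ((Matrix.of fun i j => ‖x i - x j‖ ^ 2) * X).trace}

/-! Fix a clustering `c` of `T` with centroids `μ`. On a sample `S`, the normalized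
membership matrix of the clusters of `c` restricted to `S` is positive semidefinite, entrywise
nonnegative and row-stochastic, with trace the number of clusters that meet `S`; mixing in the
identity raises the trace to `k` without changing the objective, since `D` has zero diagonal.
The objective of that matrix is the within-cluster scatter of `S`, which is at most
`|S|⁻¹ ∑_{i ∈ S} ‖x i - μ (c i)‖²` because sample centroids minimize squared distances.
Every point lies in the same proportion `s / |T|` of the samples, so averaging this bound over
`S` gives the `k`-means cost of `c`. When `|S| < k` the SDP is infeasible and `sdpVal` is the
junk value `sInf ∅ = 0`. -/

open Finset Matrix

section Averaging

variable {α : Type*} [DecidableEq α]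

lemma card_filter_mem_powersetCard_mul {t : Finset α} {i : α} (hi : i ∈ t) (s : ℕ) :
    #{S ∈ t.powersetCard s | i ∈ S} * #t = s * (#t).choose s := by
  rcases s with _ | s
  · simp
  obtain ⟨n, hn⟩ : ∃ n, #t = n + 1 := Nat.exists_eq_add_one.mpr (card_pos.mpr ⟨i, hi⟩)
  have h := card_filter_powersetCard_subset {i} t (s + 1) (singleton_subset_iff.mpr hi) (by simp)
  simp only [singleton_subset_iff, card_singleton, hn, Nat.add_sub_cancel] at h
  rw [h, hn, mul_comm, Nat.add_one_mul_choose_eq, mul_comm]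

lemma sum_powersetCard_sum_mul_card {R : Type*} [CommSemiring R] (t : Finset α) (s : ℕ)
    (f : α → R) :
    (∑ S ∈ t.powersetCard s, ∑ i ∈ S, f i) * #t = s * (#t).choose s * ∑ i ∈ t, f i := by
  rw [Finset.sum_comm' (t' := t) (s' := fun i => {S ∈ t.powersetCard s | i ∈ S})]
  · rw [sum_mul, mul_sum]
    refine sum_congr rfl fun i hi => ?_
    rw [sum_const, nsmul_eq_mul, mul_right_comm, ← Nat.cast_mul,
      card_filter_mem_powersetCard_mul hi, Nat.cast_mul]
  · intro S i
    simp only [mem_filter, mem_powersetCard]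
    exact ⟨fun h => ⟨⟨h.1, h.2⟩, h.1.1 h.2⟩, fun h => ⟨h.1.1, h.1.2⟩⟩

lemma inv_choose_mul_sum_powersetCard_inv_mul_sum {t : Finset α} {s : ℕ}
    (hs : 0 < s) (hst : s ≤ #t) (f : α → ℝ) :
    ((#t).choose s : ℝ)⁻¹ * ∑ S ∈ t.powersetCard s, (s : ℝ)⁻¹ * ∑ i ∈ S, f i
      = (#t : ℝ)⁻¹ * ∑ i ∈ t, f i := by
  have hC : ((#t).choose s : ℝ) ≠ 0 := by exact_mod_cast (Nat.choose_pos hst).ne'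
  have ht : (#t : ℝ) ≠ 0 := by exact_mod_cast (hs.trans_le hst).ne'
  have hs' : (s : ℝ) ≠ 0 := by exact_mod_cast hs.ne'
  have h := sum_powersetCard_sum_mul_card t s f
  rw [← mul_sum]
  field_simp
  linear_combination h

end Averaging

lemma sum_fiberwise_apply {ι κ M : Type*} [Fintype ι] [Fintype κ] [DecidableEq κ]
    [AddCommMonoid M] (g : ι → κ) (f : ι → κ → M) :
    ∑ j, ∑ i with g i = j, f i j = ∑ i, f i (g i) := by
  rw [← sum_fiberwise univ g (fun i => f i (g i))]
  exact sum_congr rfl fun j _ => sum_congr rfl fun i hi => by rw [(mem_filter.mp hi).2]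

section ClusterMatrix

variable {S ι : Type*} [Fintype S] [DecidableEq ι] (c : S → ι)

noncomputable def clusterMatrix : Matrix S S ℝ :=
  Matrix.of fun i j => if c i = c j then (#{l | c l = c i} : ℝ)⁻¹ else 0

lemma clusterMatrix_nonneg (i j : S) : 0 ≤ clusterMatrix c i j := by
  simp only [clusterMatrix, of_apply]; positivity

lemma posSemidef_clusterMatrix [Fintype ι] : (clusterMatrix c).PosSemidef := by
  let B : Matrix ι S ℝ := Matrix.of fun t i => if c i = t then 1 else 0
  have h : clusterMatrix c = Bᴴ * diagonal (fun t => (#{l | c l = t} : ℝ)⁻¹) * B := by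
    ext i j
    by_cases h : c i = c j <;> simp [clusterMatrix, B, mul_apply, diagonal, h]
  rw [h]
  exact (PosSemidef.diagonal fun t => by positivity).conjTranspose_mul_mul_same B

lemma clusterMatrix_mulVec_one : clusterMatrix c *ᵥ (fun _ => 1) = fun _ => 1 := by
  ext i
  have hi : (#{l | c l = c i} : ℝ) ≠ 0 := by
    exact_mod_cast (card_pos.mpr ⟨i, by simp⟩).ne'
  simp only [clusterMatrix, mulVec, dotProduct, of_apply, mul_one, ← sum_filter, sum_const,
    nsmul_eq_mul, eq_comm (a := c i)]
  exact mul_inv_cancel₀ hi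

lemma trace_clusterMatrix_le [Fintype ι] : (clusterMatrix c).trace ≤ Fintype.card ι := by
  calc (clusterMatrix c).trace = ∑ t, ∑ i with c i = t, (#{l | c l = t} : ℝ)⁻¹ := by
        rw [trace, ← sum_fiberwise univ c]
        refine sum_congr rfl fun t _ => sum_congr rfl fun i hi => ?_
        simp [clusterMatrix, (mem_filter.mp hi).2]
    _ ≤ ∑ _t : ι, (1 : ℝ) := by
        gcongr with t
        rw [sum_const, nsmul_eq_mul]
        exact mul_inv_le_one
    _ = Fintype.card ι := by simp

end ClusterMatrix

section Distances

variable {E : Type*} [NormedAddCommGroup E] [InnerProductSpace ℝ E]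

lemma sum_sum_norm_sub_sq_le {ι : Type*} (B : Finset ι) (x : ι → E) (μ : E) :
    ∑ i ∈ B, ∑ j ∈ B, ‖x i - x j‖ ^ 2 ≤ 2 * #B * ∑ i ∈ B, ‖x i - μ‖ ^ 2 := by
  have expand (i j : ι) : ‖x i - x j‖ ^ 2
      = ‖x i - μ‖ ^ 2 + ‖x j - μ‖ ^ 2 - 2 * inner ℝ (x i - μ) (x j - μ) := by
    rw [← sub_sub_sub_cancel_right (x i) (x j) μ, norm_sub_sq_real]
    ring
  have cross :
      ∑ i ∈ B, ∑ j ∈ B, inner ℝ (x i - μ) (x j - μ) = ‖∑ i ∈ B, (x i - μ)‖ ^ 2 := by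
    simp_rw [← real_inner_self_eq_norm_sq, sum_inner, inner_sum]
  calc ∑ i ∈ B, ∑ j ∈ B, ‖x i - x j‖ ^ 2
      = 2 * #B * ∑ i ∈ B, ‖x i - μ‖ ^ 2 - 2 * ‖∑ i ∈ B, (x i - μ)‖ ^ 2 := by
        simp only [expand, sum_add_distrib, sum_sub_distrib, sum_const, nsmul_eq_mul, ← mul_sum,
          cross]
        ring
    _ ≤ 2 * #B * ∑ i ∈ B, ‖x i - μ‖ ^ 2 := sub_le_self _ (by positivity)

variable {S ι : Type*} [Fintype S] [Fintype ι] [DecidableEq ι]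

lemma trace_mul_clusterMatrix_le (c : S → ι) (x : S → E) (μ : ι → E) :
    ((Matrix.of fun i j => ‖x i - x j‖ ^ 2) * clusterMatrix c).trace
      ≤ 2 * ∑ i, ‖x i - μ (c i)‖ ^ 2 := by
  calc _ = ∑ t, (#{l | c l = t} : ℝ)⁻¹ *
        ∑ i with c i = t, ∑ j with c j = t, ‖x i - x j‖ ^ 2 := by
        rw [trace, ← sum_fiberwise univ c]
        refine sum_congr rfl fun t _ => ?_
        rw [mul_sum]
        refine sum_congr rfl fun i hi => ?_
        simp only [diag_apply, mul_apply, clusterMatrix, of_apply, mul_ite, mul_zero,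
          ← sum_filter, (mem_filter.mp hi).2, mul_sum]
        exact sum_congr rfl fun j hj => by rw [(mem_filter.mp hj).2, mul_comm]
    _ ≤ ∑ t, (#{l | c l = t} : ℝ)⁻¹ *
          (2 * #{l | c l = t} * ∑ i with c i = t, ‖x i - μ t‖ ^ 2) := by
        gcongr with t
        exact sum_sum_norm_sub_sq_le _ _ _
    _ ≤ ∑ t, 2 * ∑ i with c i = t, ‖x i - μ t‖ ^ 2 := by
        refine sum_le_sum fun t _ => ?_
        rw [show ∀ n A : ℝ, n⁻¹ * (2 * n * A) = n * n⁻¹ * (2 * A) by intros; ring]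
        exact mul_le_of_le_one_left (by positivity) mul_inv_le_one
    _ = 2 * ∑ i, ‖x i - μ (c i)‖ ^ 2 := by
        rw [← mul_sum, sum_fiberwise_apply c fun i t => ‖x i - μ t‖ ^ 2]

end Distances

lemma trace_mul_nonneg {n R : Type*} [Fintype n] [Semiring R] [PartialOrder R]
    [IsOrderedRing R] {A B : Matrix n n R} (hA : ∀ i j, 0 ≤ A i j) (hB : ∀ i j, 0 ≤ B i j) :
    0 ≤ (A * B).trace :=
  sum_nonneg fun i _ => sum_nonneg fun j _ => mul_nonneg (hA i j) (hB j i)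

section SDP

variable {m : ℕ} {S : Type*} [Fintype S] {k : ℕ} (x : S → EuclideanSpace ℝ (Fin m))

lemma sdpVal_le {X : Matrix S S ℝ} (hpsd : X.PosSemidef) (hnn : ∀ i j, 0 ≤ X i j)
    (hrow : X *ᵥ (fun _ => 1) = fun _ => 1) (htr : X.trace = k) :
    sdpVal k x ≤ (2 * (Fintype.card S : ℝ))⁻¹ *
      ((Matrix.of fun i j => ‖x i - x j‖ ^ 2) * X).trace := by
  refine csInf_le ⟨0, ?_⟩ ⟨X, hpsd, hnn, hrow, htr, rfl⟩
  rintro v ⟨Y, -, hY, -, -, rfl⟩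
  exact mul_nonneg (by positivity) (trace_mul_nonneg (fun i j => sq_nonneg _) hY)

lemma sdpVal_eq_zero_of_card_lt (h : Fintype.card S < k) : sdpVal k x = 0 := by
  unfold sdpVal
  convert Real.sInf_empty
  refine Set.eq_empty_of_forall_notMem ?_
  rintro v ⟨X, -, hnn, hrow, htr, -⟩
  have hdiag (i : S) : X i i ≤ 1 := by
    have hi := congrFun hrow i
    simp only [mulVec, dotProduct, mul_one] at hi
    exact hi ▸ single_le_sum (fun j _ => hnn i j) (mem_univ i)
  have : (k : ℝ) ≤ Fintype.card S := by
    rw [← htr, trace]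
    simpa using sum_le_sum fun i (_ : i ∈ univ) => hdiag i
  exact absurd (by exact_mod_cast this) h.not_ge

lemma sdpVal_le_of_trace_le {Y : Matrix S S ℝ} (hpsd : Y.PosSemidef) (hnn : ∀ i j, 0 ≤ Y i j)
    (hrow : Y *ᵥ (fun _ => 1) = fun _ => 1) (htr : Y.trace ≤ k) (hk : k ≤ Fintype.card S) :
    sdpVal k x ≤ (2 * (Fintype.card S : ℝ))⁻¹ *
      ((Matrix.of fun i j => ‖x i - x j‖ ^ 2) * Y).trace := by
  classical
  set D : Matrix S S ℝ := Matrix.of fun i j => ‖x i - x j‖ ^ 2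
  have hkS : (k : ℝ) ≤ Fintype.card S := by exact_mod_cast hk
  obtain ⟨a, b, ha, hb, hab, hmix⟩ : (k : ℝ) ∈ segment ℝ Y.trace (Fintype.card S) := by
    rw [segment_eq_Icc (htr.trans hkS)]
    exact ⟨htr, hkS⟩
  have hD1 : (D * 1).trace = 0 := by simp [D, trace]
  calc sdpVal k x ≤ (2 * (Fintype.card S : ℝ))⁻¹ * (D * (a • Y + b • 1)).trace := by
        refine sdpVal_le x ((hpsd.smul ha).add (PosSemidef.one.smul hb)) (fun i j => ?_) ?_ ?_
        · have h1 : (0 : ℝ) ≤ (1 : Matrix S S ℝ) i j := by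
            rw [one_apply]; split_ifs <;> norm_num
          simp only [Matrix.add_apply, Matrix.smul_apply, smul_eq_mul]
          exact add_nonneg (mul_nonneg ha (hnn i j)) (mul_nonneg hb h1)
        · rw [add_mulVec, smul_mulVec, smul_mulVec, one_mulVec, hrow]
          ext
          simp [hab]
        · simpa [trace_add, trace_smul] using hmix
    _ ≤ (2 * (Fintype.card S : ℝ))⁻¹ * (D * Y).trace := by
        rw [Matrix.mul_add, Matrix.mul_smul, Matrix.mul_smul, trace_add, trace_smul, trace_smul,
          hD1, smul_zero, add_zero, smul_eq_mul]
        gcongr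
        exact mul_le_of_le_one_left (trace_mul_nonneg (fun i j => sq_nonneg _) hnn)
          (by linarith)

lemma sdpVal_le_sum_norm_sub_sq {ι : Type*} [Fintype ι] [DecidableEq ι]
    (hι : Fintype.card ι ≤ k) (c : S → ι) (μ : ι → EuclideanSpace ℝ (Fin m)) :
    sdpVal k x ≤ (Fintype.card S : ℝ)⁻¹ * ∑ i, ‖x i - μ (c i)‖ ^ 2 := by
  rcases lt_or_ge (Fintype.card S) k with hS | hS
  · rw [sdpVal_eq_zero_of_card_lt x hS]
    positivity
  have htr : (clusterMatrix c).trace ≤ k :=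
    (trace_clusterMatrix_le c).trans (by exact_mod_cast hι)
  calc sdpVal k x ≤ (2 * (Fintype.card S : ℝ))⁻¹ *
        ((Matrix.of fun i j => ‖x i - x j‖ ^ 2) * clusterMatrix c).trace :=
        sdpVal_le_of_trace_le x (posSemidef_clusterMatrix c) (clusterMatrix_nonneg c)
          (clusterMatrix_mulVec_one c) htr hS
    _ ≤ (2 * (Fintype.card S : ℝ))⁻¹ * (2 * ∑ i, ‖x i - μ (c i)‖ ^ 2) := by
        gcongr
        exact trace_mul_clusterMatrix_le c x μ
    _ = (Fintype.card S : ℝ)⁻¹ * ∑ i, ‖x i - μ (c i)‖ ^ 2 := by ring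

end SDP

theorem expected_sdpVal_le_kmeansVal_general {m : ℕ} {T : Type*} [Fintype T]
    (k s : ℕ) (hk : 1 ≤ k) (hs : s ≤ Fintype.card T)
    (x : T → EuclideanSpace ℝ (Fin m)) :
    ((Fintype.card T).choose s : ℝ)⁻¹ *
        ∑ S ∈ Finset.powersetCard s (Finset.univ : Finset T),
          sdpVal k (fun i : ↥S => x i)
      ≤ kmeansVal k x := by
  classical
  have : Nonempty (Fin k) := ⟨⟨0, hk⟩⟩
  refine le_ciInf fun c => ?_
  let μ (t : Fin k) := (#{j | c j = t} : ℝ)⁻¹ • ∑ j with c j = t, x j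
  let f (i : T) := ‖x i - μ (c i)‖ ^ 2
  have hsample (S : Finset T) (hS : S ∈ powersetCard s univ) :
      sdpVal k (fun i : S => x i) ≤ (s : ℝ)⁻¹ * ∑ i ∈ S, f i := by
    have h := sdpVal_le_sum_norm_sub_sq (fun i : S => x i) (Fintype.card_fin k).le (c ·) μ
    rwa [Fintype.card_coe, (mem_powersetCard.mp hS).2, sum_coe_sort S f] at h
  calc _ ≤ ((Fintype.card T).choose s : ℝ)⁻¹ *
        ∑ S ∈ powersetCard s univ, (s : ℝ)⁻¹ * ∑ i ∈ S, f i := by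
        gcongr with S hS
        exact hsample S hS
    _ ≤ (Fintype.card T : ℝ)⁻¹ * ∑ i, f i := by
        rcases Nat.eq_zero_or_pos s with rfl | hs0
        · simp only [CharP.cast_eq_zero, _root_.inv_zero, zero_mul, sum_const_zero, mul_zero]
          positivity
        · rw [← card_univ] at hs ⊢
          exact (inv_choose_mul_sum_powersetCard_inv_mul_sum hs0 hs f).le
    _ = _ := congrArg _ (sum_fiberwise_apply c fun i t => ‖x i - μ t‖ ^ 2).symm

/-- Drawing a subset `S` uniformly at random from the `s`-element subsets of a
nonempty finite index set `T`, the expected value of the semidefinite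
relaxation `val(S-SDP)` is at most the optimal `k`-means value `val(T-IP)`
of the full data set. -/
theorem expected_sdpVal_le_kmeansVal {m : ℕ} {T : Type*} [Fintype T] [Nonempty T]
    (k s : ℕ) (hk : 1 ≤ k) (hs : s ≤ Fintype.card T)
    (x : T → EuclideanSpace ℝ (Fin m)) :
    ((Fintype.card T).choose s : ℝ)⁻¹ *
        ∑ S ∈ Finset.powersetCard s (Finset.univ : Finset T),
          sdpVal k (fun i : ↥S => x i)
      ≤ kmeansVal k x :=
  expected_sdpVal_le_kmeansVal_general k s hk hs x
end

section
/- Let T be a nonempty finite index set, {x_i}_{i∈T} ⊆ ℝ^m, k ≥ 1, and let s ≤ |T|. If S is drawn uniformly at random from the collection of all s-element subsets of T, then E[val(S-IP)] ≤ val(T-IP), where val(S-IP) denotes the optimal k-means value of the subcollection {x_i}_{i∈S}. -/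
open scoped BigOperators

/-!
Fix an assignment `c : T → Fin k` with cluster centroids `μ`. For an `s`-subset `S`, the
clustering of `S` induced by `c` has cost at most `|S|⁻¹ ∑_{i ∈ S} ‖x i - μ (c i)‖²`, because
the centroid of each cluster of `S` minimises the sum of squared distances. Every point of `T`
lies in the same number `C(|T|-1, s-1)` of `s`-subsets, so averaging this bound over all `S`
returns (at most) the cost of `c`; taking the infimum over `c` gives the theorem.
-/

open Finset

namespace Finset

variable {ι κ M : Type*} [AddCommMonoid M]

lemma sum_fiberwise_dependent [Fintype κ] [DecidableEq κ] (s : Finset ι) (g : ι → κ)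
    (f : κ → ι → M) : ∑ j, ∑ i ∈ s with g i = j, f j i = ∑ i ∈ s, f (g i) i := by
  rw [← sum_fiberwise s g fun i ↦ f (g i) i]
  exact sum_congr rfl fun j _ ↦ sum_congr rfl fun i hi ↦ by rw [(mem_filter.1 hi).2]

lemma sum_powersetCard_sum (t : Finset ι) {n : ℕ} (hn : n ≠ 0) (g : ι → M) :
    ∑ S ∈ t.powersetCard n, ∑ i ∈ S, g i = (#t - 1).choose (n - 1) • ∑ i ∈ t, g i := by
  classical
  rw [sum_comm' (t' := t) (s' := fun i ↦ {S ∈ t.powersetCard n | {i} ⊆ S}), smul_sum]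
  · refine sum_congr rfl fun i hi ↦ ?_
    rw [sum_const, card_filter_powersetCard_subset _ _ _ (singleton_subset_iff.2 hi)
      (by rw [card_singleton]; omega), card_singleton]
  · intro S i
    simp only [mem_filter, mem_powersetCard, singleton_subset_iff]
    grind

end Finset

lemma inv_choose_mul_sum_powersetCard_eq {ι : Type*} (t : Finset ι) {n : ℕ}
    (hn : n ≠ 0) (hnt : n ≤ #t) (g : ι → ℝ) :
    ((#t).choose n : ℝ)⁻¹ * ∑ S ∈ t.powersetCard n, (n : ℝ)⁻¹ * ∑ i ∈ S, g i
      = (#t : ℝ)⁻¹ * ∑ i ∈ t, g i := by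
  obtain ⟨p, hp⟩ : ∃ p, #t = p + 1 := ⟨#t - 1, by omega⟩
  obtain ⟨q, rfl⟩ : ∃ q, n = q + 1 := ⟨n - 1, by omega⟩
  have hchoose : ((p + 1 : ℕ) : ℝ) * p.choose q = (p + 1).choose (q + 1) * (q + 1 : ℕ) := by
    exact_mod_cast Nat.add_one_mul_choose_eq p q
  have hchoose_ne : ((p + 1).choose (q + 1) : ℝ) ≠ 0 := by
    exact_mod_cast (Nat.choose_pos (by omega)).ne'
  rw [← mul_sum, sum_powersetCard_sum t hn, hp, nsmul_eq_mul, Nat.add_sub_cancel,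
    Nat.add_sub_cancel]
  field_simp
  linear_combination (∑ i ∈ t, g i) * hchoose

lemma inv_choose_mul_sum_powersetCard_le {ι : Type*} (t : Finset ι) (n : ℕ)
    {g : ι → ℝ} (hg : ∀ i ∈ t, 0 ≤ g i) :
    ((#t).choose n : ℝ)⁻¹ * ∑ S ∈ t.powersetCard n, (n : ℝ)⁻¹ * ∑ i ∈ S, g i
      ≤ (#t : ℝ)⁻¹ * ∑ i ∈ t, g i := by
  have hrhs : 0 ≤ (#t : ℝ)⁻¹ * ∑ i ∈ t, g i := mul_nonneg (by positivity) (sum_nonneg hg)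
  rcases eq_or_ne n 0 with rfl | hn
  · simpa using hrhs
  rcases le_or_gt n #t with hnt | htn
  · exact (inv_choose_mul_sum_powersetCard_eq t hn hnt g).le
  · simpa [powersetCard_eq_empty.2 htn] using hrhs

/-- `∑ ‖y i - p‖² = ∑ ‖y i - μ‖² + #A ‖μ - p‖²` for the centroid `μ`. -/
lemma sum_norm_sub_centroid_sq_le {ι E : Type*} [NormedAddCommGroup E] [InnerProductSpace ℝ E]
    (A : Finset ι) (y : ι → E) (p : E) :
    ∑ i ∈ A, ‖y i - (#A : ℝ)⁻¹ • ∑ j ∈ A, y j‖ ^ 2 ≤ ∑ i ∈ A, ‖y i - p‖ ^ 2 := by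
  rcases A.eq_empty_or_nonempty with rfl | hA
  · simp
  set n : ℝ := (#A : ℝ)
  have hn : n ≠ 0 := Nat.cast_ne_zero.2 (card_ne_zero.2 hA)
  set μ : E := n⁻¹ • ∑ j ∈ A, y j
  have hsum : ∑ j ∈ A, y j = n • μ := by rw [smul_smul, mul_inv_cancel₀ hn, one_smul]
  have hpoint : ∀ i ∈ A, ‖y i - p‖ ^ 2 - ‖y i - μ‖ ^ 2
      = 2 * inner ℝ (y i) (μ - p) + (‖p‖ ^ 2 - ‖μ‖ ^ 2) := fun i _ ↦ by
    rw [norm_sub_sq_real, norm_sub_sq_real, inner_sub_right]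
    ring
  have hgap : ∑ i ∈ A, ‖y i - p‖ ^ 2 - ∑ i ∈ A, ‖y i - μ‖ ^ 2 = n * ‖μ - p‖ ^ 2 := by
    rw [← sum_sub_distrib, sum_congr rfl hpoint, sum_add_distrib, sum_const, ← mul_sum,
      ← sum_inner, hsum, real_inner_smul_left, nsmul_eq_mul, inner_sub_right,
      real_inner_self_eq_norm_sq, norm_sub_sq_real]
    ring
  have : 0 ≤ n * ‖μ - p‖ ^ 2 := mul_nonneg (Nat.cast_nonneg _) (sq_nonneg _)
  linarith

section KMeans

variable {m k : ℕ} {T : Type*} [Fintype T] (x : T → EuclideanSpace ℝ (Fin m))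

noncomputable def clusterMean (c : T → Fin k) (t : Fin k) : EuclideanSpace ℝ (Fin m) :=
  ((univ.filter fun j ↦ c j = t).card : ℝ)⁻¹ • ∑ j ∈ univ.filter (fun j ↦ c j = t), x j

lemma kmeansVal_le_of_centers (c : T → Fin k) (μ : Fin k → EuclideanSpace ℝ (Fin m)) :
    kmeansVal k x ≤ (Fintype.card T : ℝ)⁻¹ * ∑ i, ‖x i - μ (c i)‖ ^ 2 := by
  refine (ciInf_le ⟨0, ?_⟩ c).trans ?_
  · rintro _ ⟨c', rfl⟩
    positivity
  · rw [← sum_fiberwise_dependent univ c fun t i ↦ ‖x i - μ t‖ ^ 2]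
    exact mul_le_mul_of_nonneg_left
      (sum_le_sum fun t _ ↦ sum_norm_sub_centroid_sq_le _ x (μ t)) (by positivity)

end KMeans

theorem expected_kmeansVal_subset_le_kmeansVal_general {m : ℕ} {T : Type*} [Fintype T]
    (k s : ℕ) (hk : 1 ≤ k)
    (x : T → EuclideanSpace ℝ (Fin m)) :
    ((Fintype.card T).choose s : ℝ)⁻¹ *
        ∑ S ∈ Finset.powersetCard s (Finset.univ : Finset T),
          kmeansVal k (fun i : ↥S => x i)
      ≤ kmeansVal k x := by
  have : Nonempty (Fin k) := ⟨⟨0, hk⟩⟩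
  refine le_ciInf fun c ↦ ?_
  set g : T → ℝ := fun i ↦ ‖x i - clusterMean x c (c i)‖ ^ 2
  calc _ ≤ ((Fintype.card T).choose s : ℝ)⁻¹ *
          ∑ S ∈ powersetCard s (univ : Finset T), (s : ℝ)⁻¹ * ∑ i ∈ S, g i := by
        gcongr with S hS
        rw [← (mem_powersetCard.1 hS).2, ← sum_coe_sort S g, ← Fintype.card_coe S]
        exact kmeansVal_le_of_centers _ (fun i : S ↦ c i) (clusterMean x c)
    _ ≤ (Fintype.card T : ℝ)⁻¹ * ∑ i, g i :=
        inv_choose_mul_sum_powersetCard_le univ s fun i _ ↦ sq_nonneg _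
    _ = _ := by rw [← sum_fiberwise_dependent univ c fun t i ↦ ‖x i - clusterMean x c t‖ ^ 2]; rfl

/-- Drawing a subset `S` uniformly at random from the `s`-element subsets of a
nonempty finite index set `T`, the expected optimal `k`-means value of the
subcollection `{x_i}_{i ∈ S}` is at most the optimal `k`-means value
`val(T-IP)` of the full data set. -/
theorem expected_kmeansVal_subset_le_kmeansVal {m : ℕ} {T : Type*} [Fintype T] [Nonempty T]
    (k s : ℕ) (hk : 1 ≤ k) (hs : s ≤ Fintype.card T)
    (x : T → EuclideanSpace ℝ (Fin m)) :
    ((Fintype.card T).choose s : ℝ)⁻¹ *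
        ∑ S ∈ Finset.powersetCard s (Finset.univ : Finset T),
          kmeansVal k (fun i : ↥S => x i)
      ≤ kmeansVal k x :=
  expected_kmeansVal_subset_le_kmeansVal_general k s hk x
end

section
/- Let M be an s×s real symmetric matrix and k ≥ 1. Define F(M) = max |tr(MX)| over all s×s real symmetric matrices X with X1 = 1, tr(X) = k, X entrywise nonnegative, and X positive semidefinite. Then F(M) ≤ min{‖M‖_*, k·‖M‖_{2→2}}, where ‖·‖_* is the nuclear norm (sum of singular values) and ‖·‖_{2→2} is the spectral norm (largest singular value). -/
/-!
Diagonalise `M = U diag(λ) Uᵀ`. Then `tr (M X) = ∑ λᵢ cᵢ` where `cᵢ` is the `i`-th diagonal entry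
of `Uᵀ X U`. Positive semidefiniteness of `X` gives `cᵢ ≥ 0`, and `∑ cᵢ = tr X = k`. As `X` is
doubly stochastic, `vᵀ X v ≤ vᵀ v` for every `v` (AM-GM on `2 vₚ v_q ≤ vₚ² + v_q²`), so `cᵢ ≤ 1`.
Hence `|tr (M X)| ≤ ∑ |λᵢ| cᵢ`, which is at most `∑ |λᵢ| = ‖M‖_*` and at most
`k · maxᵢ |λᵢ| ≤ k ‖M‖_{2→2}`.
-/

open scoped BigOperators

/-- The spectral norm (largest singular value) of a real matrix, realized as
the operator norm of the induced linear map between Euclidean spaces. -/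
noncomputable def specNorm {α β : Type*} [Fintype α] [Fintype β] [DecidableEq β]
    (A : Matrix α β ℝ) : ℝ :=
  ‖LinearMap.toContinuousLinearMap (Matrix.toEuclideanLin A)‖

/-- The nuclear norm (sum of singular values) of a real square matrix:
the singular values are the square roots of the eigenvalues of `MᴴM`. -/
noncomputable def nuclearNorm {n : Type*} [Fintype n] [DecidableEq n]
    (M : Matrix n n ℝ) : ℝ :=
  ∑ i, Real.sqrt ((Matrix.isHermitian_conjTranspose_mul_self M).eigenvalues i)

open Matrix MatrixOrder

namespace Matrix

variable {n : Type*} [Fintype n]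

lemma PosSemidef.diag_star_mul_mul_nonneg {R : Type*} [Ring R] [PartialOrder R] [StarRing R]
    {X : Matrix n n R} (hX : X.PosSemidef) (B : Matrix n n R) (i : n) :
    0 ≤ (star B * X * B) i i :=
  (hX.conjTranspose_mul_mul_same B).diag_nonneg

variable [DecidableEq n]

lemma trace_star_mul_mul_unitary {R : Type*} [CommRing R] [StarRing R]
    (U : unitaryGroup n R) (X : Matrix n n R) :
    (star (U : Matrix n n R) * X * U).trace = X.trace := by
  rw [trace_mul_cycle, Unitary.mul_star_self_of_mem U.2, Matrix.one_mul]

lemma IsHermitian.trace_cfc {𝕜 : Type*} [RCLike 𝕜] {A : Matrix n n 𝕜} (hA : A.IsHermitian)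
    (f : ℝ → ℝ) : (cfc f A).trace = ∑ i, (f (hA.eigenvalues i) : 𝕜) := by
  rw [hA.cfc_eq, IsHermitian.cfc, Unitary.conjStarAlgAut_apply, trace_mul_cycle,
    Unitary.star_mul_self_of_mem hA.eigenvectorUnitary.2, Matrix.one_mul, trace_diagonal]
  rfl

lemma IsHermitian.trace_mul_eq_sum_eigenvalues_mul_diag {A : Matrix n n ℝ} (hA : A.IsHermitian)
    (X : Matrix n n ℝ) :
    (A * X).trace = ∑ i, hA.eigenvalues i *
      (star (hA.eigenvectorUnitary : Matrix n n ℝ) * X * hA.eigenvectorUnitary) i i := by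
  conv_lhs => rw [hA.spectral_theorem, Unitary.conjStarAlgAut_apply]
  rw [Matrix.mul_assoc, trace_mul_cycle]
  simp [trace, mul_diagonal, mul_comm]

lemma IsHermitian.abs_trace_mul_le {A X : Matrix n n ℝ} (hA : A.IsHermitian) (hX : X.PosSemidef) :
    |(A * X).trace| ≤ ∑ i, |hA.eigenvalues i| *
      (star (hA.eigenvectorUnitary : Matrix n n ℝ) * X * hA.eigenvectorUnitary) i i := by
  rw [hA.trace_mul_eq_sum_eigenvalues_mul_diag]
  refine (Finset.abs_sum_le_sum_abs _ _).trans_eq (Finset.sum_congr rfl fun i _ => ?_)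
  rw [abs_mul, abs_of_nonneg (hX.diag_star_mul_mul_nonneg _ i)]

lemma dotProduct_mulVec_le_dotProduct_self_of_mem_doublyStochastic {X : Matrix n n ℝ}
    (hX : X ∈ doublyStochastic ℝ n) (v : n → ℝ) : v ⬝ᵥ X *ᵥ v ≤ v ⬝ᵥ v := by
  obtain ⟨hnonneg, hrow, hcol⟩ := mem_doublyStochastic_iff_sum.mp hX
  have hrow' : ∑ p, ∑ q, X p q * v p ^ 2 = v ⬝ᵥ v := by
    simp only [← Finset.sum_mul, hrow, one_mul, dotProduct, sq]
  have hcol' : ∑ p, ∑ q, X p q * v q ^ 2 = v ⬝ᵥ v := by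
    rw [Finset.sum_comm]
    simp only [← Finset.sum_mul, hcol, one_mul, dotProduct, sq]
  calc v ⬝ᵥ X *ᵥ v = ∑ p, ∑ q, X p q * (v p * v q) := by
        simp only [dotProduct, mulVec, Finset.mul_sum]
        exact Finset.sum_congr rfl fun _ _ => Finset.sum_congr rfl fun _ _ => by ring
    _ ≤ ∑ p, ∑ q, (X p q * v p ^ 2 + X p q * v q ^ 2) / 2 :=
        Finset.sum_le_sum fun p _ => Finset.sum_le_sum fun q _ => by
          nlinarith [mul_nonneg (hnonneg p q) (sq_nonneg (v p - v q))]
    _ = v ⬝ᵥ v := by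
        simp only [← Finset.sum_div, Finset.sum_add_distrib, hrow', hcol']
        ring

lemma diag_star_mul_mul_unitary_le_one {X : Matrix n n ℝ} (hX : X ∈ doublyStochastic ℝ n)
    (U : unitaryGroup n ℝ) (i : n) : (star (U : Matrix n n ℝ) * X * U) i i ≤ 1 := by
  have hcol : (fun p => (U : Matrix n n ℝ) p i) ⬝ᵥ (fun p => (U : Matrix n n ℝ) p i) = 1 := by
    have h := Unitary.star_mul_self_of_mem U.2
    simpa [mul_apply, dotProduct] using congr($h i i)
  calc (star (U : Matrix n n ℝ) * X * U) i i
      = (fun p => (U : Matrix n n ℝ) p i) ⬝ᵥ X *ᵥ (fun p => (U : Matrix n n ℝ) p i) := by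
        rw [Matrix.mul_assoc]
        simp [mul_apply, dotProduct, mulVec]
    _ ≤ 1 := hcol ▸ dotProduct_mulVec_le_dotProduct_self_of_mem_doublyStochastic hX _

lemma IsHermitian.abs_eigenvalues_le_specNorm {M : Matrix n n ℝ} (hM : M.IsHermitian) (i : n) :
    |hM.eigenvalues i| ≤ specNorm M := by
  have happ : (LinearMap.toContinuousLinearMap (toEuclideanLin M)) (hM.eigenvectorBasis i)
      = hM.eigenvalues i • hM.eigenvectorBasis i := by
    apply WithLp.ofLp_injective
    simpa using hM.mulVec_eigenvectorBasis i
  simpa [specNorm, happ, norm_smul, hM.eigenvectorBasis.orthonormal.1 i] using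
    (LinearMap.toContinuousLinearMap (toEuclideanLin M)).le_opNorm (hM.eigenvectorBasis i)

end Matrix

section

variable {n : Type*} [Fintype n] [DecidableEq n]

lemma nuclearNorm_eq_trace_abs (M : Matrix n n ℝ) : nuclearNorm M = (CFC.abs M).trace := by
  rw [CFC.abs, star_eq_conjTranspose,
    CFC.sqrt_eq_real_sqrt _ (posSemidef_conjTranspose_mul_self M).nonneg, cfcₙ_eq_cfc,
    (isHermitian_conjTranspose_mul_self M).trace_cfc]
  rfl

lemma Matrix.IsHermitian.nuclearNorm_eq_sum_abs_eigenvalues {M : Matrix n n ℝ}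
    (hM : M.IsHermitian) : nuclearNorm M = ∑ i, |hM.eigenvalues i| := by
  rw [nuclearNorm_eq_trace_abs, CFC.abs_eq_cfc_norm M hM.isSelfAdjoint, hM.trace_cfc]
  rfl

end

theorem F_le_min_nuclear_spectral_general {s k : ℕ}
    (M : Matrix (Fin s) (Fin s) ℝ) (hM : M.IsSymm) :
    sSup {v : ℝ | ∃ X : Matrix (Fin s) (Fin s) ℝ,
        X.PosSemidef ∧ (∀ i j, 0 ≤ X i j) ∧
        X.mulVec (fun _ => (1 : ℝ)) = (fun _ => (1 : ℝ)) ∧ X.trace = (k : ℝ) ∧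
        v = |(M * X).trace|}
      ≤ min (nuclearNorm M) ((k : ℝ) * specNorm M) := by
  have hMh : M.IsHermitian := by rwa [IsHermitian, conjTranspose_eq_transpose_of_trivial]
  refine Real.sSup_le ?_ <| le_min (Finset.sum_nonneg fun _ _ => Real.sqrt_nonneg _)
    (mul_nonneg k.cast_nonneg (norm_nonneg _))
  rintro _ ⟨X, hX, hX_nonneg, hX_row, hX_trace, rfl⟩
  have hX_ds : X ∈ doublyStochastic ℝ (Fin s) := by
    refine ⟨hX_nonneg, hX_row, ?_⟩
    rw [← hX.isHermitian.eq, conjTranspose_eq_transpose_of_trivial, vecMul_transpose]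
    exact hX_row
  set U := hMh.eigenvectorUnitary
  set c : Fin s → ℝ := fun i => (star (U : Matrix (Fin s) (Fin s) ℝ) * X * U) i i
  have hc_nonneg : ∀ i, 0 ≤ c i := hX.diag_star_mul_mul_nonneg _
  have hc_le_one : ∀ i, c i ≤ 1 := diag_star_mul_mul_unitary_le_one hX_ds U
  have hc_sum : ∑ i, c i = k := by rw [← hX_trace, ← trace_star_mul_mul_unitary U X]; rfl
  refine le_min ?_ ?_
  · calc |(M * X).trace| ≤ ∑ i, |hMh.eigenvalues i| * c i := hMh.abs_trace_mul_le hX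
      _ ≤ ∑ i, |hMh.eigenvalues i| := Finset.sum_le_sum fun i _ =>
          mul_le_of_le_one_right (abs_nonneg _) (hc_le_one i)
      _ = nuclearNorm M := hMh.nuclearNorm_eq_sum_abs_eigenvalues.symm
  · calc |(M * X).trace| ≤ ∑ i, |hMh.eigenvalues i| * c i := hMh.abs_trace_mul_le hX
      _ ≤ ∑ i, specNorm M * c i := Finset.sum_le_sum fun i _ =>
          mul_le_mul_of_nonneg_right (hMh.abs_eigenvalues_le_specNorm i) (hc_nonneg i)
      _ = k * specNorm M := by rw [← Finset.mul_sum, hc_sum, mul_comm]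

/-- For a real symmetric `s × s` matrix `M` and `k ≥ 1`, the quantity
`F(M) = max |tr(MX)|` over all symmetric `X` with `X1 = 1`, `tr X = k`,
`X` entrywise nonnegative and positive semidefinite, is at most
`min(‖M‖_*, k‖M‖_{2→2})`. -/
theorem F_le_min_nuclear_spectral {s k : ℕ} (hk : 1 ≤ k)
    (M : Matrix (Fin s) (Fin s) ℝ) (hM : M.IsSymm) :
    sSup {v : ℝ | ∃ X : Matrix (Fin s) (Fin s) ℝ,
        X.PosSemidef ∧ (∀ i j, 0 ≤ X i j) ∧
        X.mulVec (fun _ => (1 : ℝ)) = (fun _ => (1 : ℝ)) ∧ X.trace = (k : ℝ) ∧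
        v = |(M * X).trace|}
      ≤ min (nuclearNorm M) ((k : ℝ) * specNorm M) :=
  F_le_min_nuclear_spectral_general M hM
end
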